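/- arXiv:2602.22027 — 4 statements merged into one kernel-verified Lean document; each statement's English description precedes it below -/
import Mathlib

section
/- Let K : ℝ^d → ℝ be nonnegative with ∫ K = 1 and K > 0 a.e. on the ball B_ℓ(0) = supp K, and let g : [0,1] → ℝ satisfy g(0) = 0, g(u) ≥ r u for u ∈ (0,1] with r > 0. If u : ℝ^d → [0,1] is measurable and satisfies, for a.e. x, either u(x) = 1 or g(u(x))·(1 − (K*𝟙_{{u=1}})(x)) + g(1)·(K*𝟙_{{u=1}})(x) = 0, then u = 0 a.e. or u = 1 a.e. -/
open MeasureTheory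

theorem stmt_5 (d : ℕ) (K : EuclideanSpace ℝ (Fin d) → ℝ) (g : ℝ → ℝ) (r ℓ : ℝ)
    (hr : 0 < r) (hℓ : 0 < ℓ)
    (hK0 : ∀ x, 0 ≤ K x) (hKint : Integrable K) (hK1 : (∫ x, K x) = 1)
    (hKpos : ∀ᵐ x ∂volume, x ∈ Metric.ball (0 : EuclideanSpace ℝ (Fin d)) ℓ → 0 < K x)
    (hKsupp : ∀ x : EuclideanSpace ℝ (Fin d), ℓ < ‖x‖ → K x = 0)
    (hg0 : g 0 = 0) (hg : ∀ v : ℝ, 0 < v → v ≤ 1 → r * v ≤ g v)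
    (u : EuclideanSpace ℝ (Fin d) → ℝ) (hu : Measurable u)
    (hu01 : ∀ x, u x ∈ Set.Icc (0 : ℝ) 1)
    (hstat : ∀ᵐ x ∂volume, u x = 1 ∨
      g (u x) * (1 - ∫ y, K (x - y) * Set.indicator {z | u z = 1} (fun _ => (1 : ℝ)) y) +
        g 1 * (∫ y, K (x - y) * Set.indicator {z | u z = 1} (fun _ => (1 : ℝ)) y) = 0) :
    (∀ᵐ x ∂volume, u x = 0) ∨ (∀ᵐ x ∂volume, u x = 1) := by
  classical
  set S : Set (EuclideanSpace ℝ (Fin d)) := {z | u z = 1} with hSdef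
  have hS : MeasurableSet S := hu (measurableSet_singleton 1)
  set ind : EuclideanSpace ℝ (Fin d) → ℝ := Set.indicator S (fun _ => (1 : ℝ)) with hinddef
  set φ : EuclideanSpace ℝ (Fin d) → ℝ := fun x => ∫ y, K (x - y) * ind y with hφdef
  have hind0 : ∀ y, 0 ≤ ind y := fun y => Set.indicator_nonneg (fun _ _ => zero_le_one) y
  have hind1 : ∀ y, ind y ≤ 1 := by
    intro y
    by_cases h : y ∈ S
    · simp [hinddef, h]
    · simp [hinddef, h]
  have hindmeas : Measurable ind := measurable_const.indicator hS
  have hKx : ∀ x : EuclideanSpace ℝ (Fin d), Integrable (fun y => K (x - y)) :=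
    fun x => hKint.comp_sub_left x
  have hint : ∀ x : EuclideanSpace ℝ (Fin d), Integrable (fun y => K (x - y) * ind y) := by
    intro x
    refine (hKx x).mono' ((hKx x).aestronglyMeasurable.mul hindmeas.aestronglyMeasurable) ?_
    filter_upwards with y
    rw [Real.norm_eq_abs, abs_mul, abs_of_nonneg (hK0 _), abs_of_nonneg (hind0 y)]
    exact mul_le_of_le_one_right (hK0 _) (hind1 y)
  have hφ0 : ∀ x, 0 ≤ φ x :=
    fun x => integral_nonneg (fun y => mul_nonneg (hK0 _) (hind0 y))
  have hφ1 : ∀ x, φ x ≤ 1 := by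
    intro x
    calc φ x ≤ ∫ y, K (x - y) :=
          integral_mono (hint x) (hKx x) (fun y => mul_le_of_le_one_right (hK0 _) (hind1 y))
      _ = ∫ y, K y := integral_sub_left_eq_self K volume x
      _ = 1 := hK1
  have hg1 : 0 < g 1 := lt_of_lt_of_le (by linarith) (hg 1 one_pos le_rfl)
  -- hstat restated through φ
  have hstat' : ∀ᵐ x ∂volume, u x = 1 ∨ g (u x) * (1 - φ x) + g 1 * φ x = 0 := hstat
  -- a.e. u ∈ {0, 1}
  have h01 : ∀ᵐ x ∂volume, u x = 0 ∨ u x = 1 := by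
    filter_upwards [hstat'] with x hx
    rcases hx with h1 | heq
    · exact Or.inr h1
    rcases eq_or_ne (u x) 0 with h0 | h0
    · exact Or.inl h0
    exfalso
    have hux : 0 < u x := lt_of_le_of_ne (hu01 x).1 (Ne.symm h0)
    have hgu : 0 < g (u x) := lt_of_lt_of_le (mul_pos hr hux) (hg _ hux (hu01 x).2)
    have ha : 0 ≤ g (u x) * (1 - φ x) := mul_nonneg hgu.le (by linarith [hφ1 x])
    have hb : 0 ≤ g 1 * φ x := mul_nonneg hg1.le (hφ0 x)
    obtain ⟨ha0, hb0⟩ := (add_eq_zero_iff_of_nonneg ha hb).mp heq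
    have hφx : φ x = 0 := by
      rcases mul_eq_zero.mp hb0 with h | h
      · exact absurd h hg1.ne'
      · exact h
    rw [hφx] at ha0
    simp only [sub_zero, mul_one] at ha0
    exact hgu.ne' ha0
  -- a.e., u = 0 forces φ = 0
  have hzero : ∀ᵐ x ∂volume, u x = 0 → φ x = 0 := by
    filter_upwards [hstat'] with x hx h0
    rcases hx with h1 | heq
    · rw [h0] at h1; norm_num at h1
    rw [h0, hg0, zero_mul, zero_add] at heq
    rcases mul_eq_zero.mp heq with h | h
    · exact absurd h hg1.ne'
    · exact h
  -- if S ∩ B_ℓ(x) has positive measure, then φ x > 0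
  have hpos : ∀ x : EuclideanSpace ℝ (Fin d),
      0 < volume (S ∩ Metric.ball x ℓ) → 0 < φ x := by
    intro x hx
    by_contra hcon
    push_neg at hcon
    have hφx : φ x = 0 := le_antisymm hcon (hφ0 x)
    have hae : (fun y => K (x - y) * ind y) =ᵐ[volume] 0 :=
      (integral_eq_zero_iff_of_nonneg (fun y => mul_nonneg (hK0 _) (hind0 y)) (hint x)).mp hφx
    have hae0 : ∀ᵐ y ∂volume, K (x - y) * ind y = 0 := hae
    have hmp : MeasurePreserving (fun y => x - y)
        (volume : Measure (EuclideanSpace ℝ (Fin d))) volume :=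
      Measure.measurePreserving_sub_left volume x
    have hN : volume {z : EuclideanSpace ℝ (Fin d) |
        ¬ (z ∈ Metric.ball (0 : EuclideanSpace ℝ (Fin d)) ℓ → 0 < K z)} = 0 := ae_iff.mp hKpos
    have hN2 : volume ((fun y : EuclideanSpace ℝ (Fin d) => x - y) ⁻¹'
        {z : EuclideanSpace ℝ (Fin d) |
          ¬ (z ∈ Metric.ball (0 : EuclideanSpace ℝ (Fin d)) ℓ → 0 < K z)}) = 0 := by
      rw [hmp.measure_preimage (NullMeasurableSet.of_null hN)]
      exact hN
    have hKpos' : ∀ᵐ y ∂volume,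
        (x - y ∈ Metric.ball (0 : EuclideanSpace ℝ (Fin d)) ℓ → 0 < K (x - y)) := by
      rw [ae_iff]
      exact measure_mono_null (fun y hy => hy) hN2
    have hboth : ∀ᵐ y ∂volume, K (x - y) * ind y = 0 ∧
        (x - y ∈ Metric.ball (0 : EuclideanSpace ℝ (Fin d)) ℓ → 0 < K (x - y)) :=
      hae0.and hKpos'
    have hGc : volume {y : EuclideanSpace ℝ (Fin d) | ¬ (K (x - y) * ind y = 0 ∧
        (x - y ∈ Metric.ball (0 : EuclideanSpace ℝ (Fin d)) ℓ → 0 < K (x - y)))} = 0 :=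
      ae_iff.mp hboth
    have hsub : S ∩ Metric.ball x ℓ ⊆ {y : EuclideanSpace ℝ (Fin d) | ¬ (K (x - y) * ind y = 0 ∧
        (x - y ∈ Metric.ball (0 : EuclideanSpace ℝ (Fin d)) ℓ → 0 < K (x - y)))} := by
      rintro y ⟨hyS, hyb⟩ ⟨hy0, hyK⟩
      have hball : x - y ∈ Metric.ball (0 : EuclideanSpace ℝ (Fin d)) ℓ := by
        rw [Metric.mem_ball, dist_zero_right, ← dist_eq_norm]
        rw [Metric.mem_ball] at hyb
        rw [dist_comm]
        exact hyb
      have hK' := hyK hball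
      have hind' : ind y = 1 := Set.indicator_of_mem hyS _
      rw [hind', mul_one] at hy0
      exact hK'.ne' hy0
    exact hx.ne' (measure_mono_null hsub hGc)
  -- T is open
  set T : Set (EuclideanSpace ℝ (Fin d)) := {x | 0 < volume (S ∩ Metric.ball x ℓ)} with hTdef
  have hTopen : IsOpen T := by
    rw [Metric.isOpen_iff]
    intro x hx
    have hcup : S ∩ Metric.ball x ℓ = ⋃ n : ℕ, S ∩ Metric.ball x (ℓ - ℓ / (n + 1)) := by
      ext y
      simp only [Set.mem_inter_iff, Set.mem_iUnion, Metric.mem_ball]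
      constructor
      · rintro ⟨hyS, hyd⟩
        obtain ⟨n, hn⟩ := exists_nat_gt (ℓ / (ℓ - dist y x))
        refine ⟨n, hyS, ?_⟩
        have hden : (0 : ℝ) < ℓ - dist y x := by linarith
        have h1 : ℓ / (ℓ - dist y x) < (n : ℝ) + 1 := by linarith
        have h2 : ℓ < (ℓ - dist y x) * ((n : ℝ) + 1) := by
          rw [div_lt_iff₀ hden] at h1
          linarith
        have hpos' : (0 : ℝ) < (n : ℝ) + 1 := by positivity
        have h3 : ℓ / ((n : ℝ) + 1) < ℓ - dist y x := by
          rw [div_lt_iff₀ hpos']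
          linarith
        linarith
      · rintro ⟨n, hyS, hyd⟩
        refine ⟨hyS, ?_⟩
        have : (0 : ℝ) < ℓ / ((n : ℝ) + 1) := by positivity
        linarith
    have hn : ∃ n : ℕ, volume (S ∩ Metric.ball x (ℓ - ℓ / (n + 1))) ≠ 0 := by
      by_contra hcon
      push_neg at hcon
      have := measure_iUnion_null hcon
      rw [← hcup] at this
      exact hx.ne' this
    obtain ⟨n, hn⟩ := hn
    refine ⟨ℓ / (n + 1), by positivity, fun x' hx' => ?_⟩
    show 0 < volume (S ∩ Metric.ball x' ℓ)
    refine lt_of_lt_of_le (pos_iff_ne_zero.mpr hn) (measure_mono ?_)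
    rintro y ⟨hyS, hyb⟩
    refine ⟨hyS, ?_⟩
    rw [Metric.mem_ball] at hyb hx' ⊢
    have h1 := dist_triangle y x x'
    have h2 : dist x x' = dist x' x := dist_comm x x'
    linarith
  -- covering lemma
  have hcover : ∀ E : Set (EuclideanSpace ℝ (Fin d)),
      (∀ x ∈ E, volume (E ∩ Metric.ball x ℓ) = 0) → volume E = 0 := by
    intro E hE
    obtain ⟨D, hDc, hDd⟩ := TopologicalSpace.exists_countable_dense (EuclideanSpace ℝ (Fin d))
    have hsub : E ⊆ ⋃ q ∈ D, E ∩ Metric.ball q (ℓ / 2) := by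
      intro e he
      obtain ⟨q, hq⟩ := Metric.dense_iff.mp hDd e (ℓ / 2) (by positivity)
      refine Set.mem_biUnion hq.2 ⟨he, ?_⟩
      rw [Metric.mem_ball]
      have := hq.1
      rw [Metric.mem_ball] at this
      rw [dist_comm]
      exact this
    refine measure_mono_null hsub ((measure_biUnion_null_iff hDc).mpr ?_)
    intro q hq
    rcases Set.eq_empty_or_nonempty (E ∩ Metric.ball q (ℓ / 2)) with h | h
    · simp [h]
    obtain ⟨x, hxE, hxq⟩ := h
    refine measure_mono_null ?_ (hE x hxE)
    rintro y ⟨hyE, hyq⟩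
    refine ⟨hyE, ?_⟩
    rw [Metric.mem_ball] at hyq hxq ⊢
    have h1 := dist_triangle y q x
    have h2 : dist q x = dist x q := dist_comm q x
    linarith
  -- S \ T is null
  have hST : volume (S \ T) = 0 := by
    apply hcover
    rintro x ⟨hxS, hxT⟩
    have hx0 : volume (S ∩ Metric.ball x ℓ) = 0 := by
      by_contra h
      exact hxT (pos_iff_ne_zero.mpr h)
    refine measure_mono_null ?_ hx0
    rintro y ⟨hyE, hyb⟩
    exact ⟨hyE.1, hyb⟩
  -- T \ S is null
  have hTS : volume (T \ S) = 0 := by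
    rw [measure_eq_zero_iff_ae_notMem]
    filter_upwards [h01, hzero] with x hx hz
    intro hmem
    have hxT : x ∈ T := hmem.1
    have hxS : x ∉ S := hmem.2
    rcases hx with h0 | h1
    · exact (hpos x hxT).ne' (hz h0)
    · exact hxS h1
  -- T is clopen
  have hclopen : T = ∅ ∨ T = Set.univ := by
    refine isClopen_iff.mp ⟨?_, hTopen⟩
    rw [← closure_subset_iff_isClosed]
    intro x hx
    by_contra hxT
    have hS0 : volume (S ∩ Metric.ball x ℓ) = 0 := by
      by_contra h
      exact hxT (pos_iff_ne_zero.mpr h)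
    have hT0 : volume (T ∩ Metric.ball x ℓ) = 0 := by
      have hsub2 : T ∩ Metric.ball x ℓ ⊆ (T \ S) ∪ (S ∩ Metric.ball x ℓ) := by
        rintro y ⟨hyT, hyb⟩
        by_cases hyS : y ∈ S
        · exact Or.inr ⟨hyS, hyb⟩
        · exact Or.inl ⟨hyT, hyS⟩
      exact measure_mono_null hsub2 (measure_union_null hTS hS0)
    obtain ⟨y, hyT, hyd⟩ := Metric.mem_closure_iff.mp hx ℓ hℓ
    obtain ⟨δ, hδ, hball⟩ := Metric.isOpen_iff.mp hTopen y hyT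
    have hδ' : 0 < min δ (ℓ - dist y x) := by
      refine lt_min hδ ?_
      rw [dist_comm]
      linarith
    have hsub3 : Metric.ball y (min δ (ℓ - dist y x)) ⊆ T ∩ Metric.ball x ℓ := by
      intro z hz
      rw [Metric.mem_ball] at hz
      constructor
      · exact hball (Metric.mem_ball.mpr (lt_of_lt_of_le hz (min_le_left _ _)))
      · rw [Metric.mem_ball]
        have h1 := dist_triangle z y x
        have h2 : dist z y < ℓ - dist y x := lt_of_lt_of_le hz (min_le_right _ _)
        linarith
    have hb := Metric.measure_ball_pos volume y hδ'
    have : volume (Metric.ball y (min δ (ℓ - dist y x))) ≤ volume (T ∩ Metric.ball x ℓ) :=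
      measure_mono hsub3
    rw [hT0] at this
    exact (lt_of_lt_of_le hb this).ne' rfl
  rcases hclopen with hT | hT
  · -- T = ∅ : u = 0 a.e.
    left
    have hSnull : volume S = 0 := by
      apply hcover
      intro x _
      have hx : x ∉ T := by rw [hT]; exact Set.notMem_empty x
      by_contra h
      exact hx (pos_iff_ne_zero.mpr h)
    filter_upwards [h01, measure_eq_zero_iff_ae_notMem.mp hSnull] with x hx hnx
    rcases hx with h0 | h1
    · exact h0
    · exact absurd h1 hnx
  · -- T = univ : u = 1 a.e.
    right
    have hSc : volume Sᶜ = 0 := by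
      have : Sᶜ = T \ S := by rw [hT, Set.compl_eq_univ_diff]
      rw [this]
      exact hTS
    filter_upwards [measure_eq_zero_iff_ae_notMem.mp hSc] with x hx
    have : x ∈ S := not_not.mp hx
    exact this
end

section
/- Monotonicity of the traveling wave profile in the speed: if φ_{c₀}(s) ≥ 0 for s ∈ [0, s₀] with s₀ ≤ ℓ, then for every c > c₀ one has φ_c(s) > φ_{c₀}(s) for all s ∈ (0, s₀], where φ_c denotes the solution of φ(0)=1, −cφ'(s) = g(φ(s))(1−h(s)) + g(1)h(s). -/
theorem stmt_9 (g h φ₀ φ₁ : ℝ → ℝ) (r ℓ c₀ c s₀ : ℝ) (Lg : NNReal)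
    (hr : 0 < r) (hℓ : 0 < ℓ) (hc₀ : 0 < c₀) (hcc : c₀ < c)
    (hgLip : LipschitzWith Lg g) (hg0 : g 0 = 0)
    (hgnn : ∀ v : ℝ, 0 ≤ g v) (hgle : ∀ v : ℝ, g v ≤ g 1)
    (hglow : ∀ v : ℝ, 0 < v → v ≤ 1 → r * v ≤ g v)
    (hhcont : ContinuousOn h (Set.Ici 0)) (hhanti : AntitoneOn h (Set.Ici 0))
    (hh01 : ∀ s : ℝ, 0 ≤ s → h s ∈ Set.Icc (0 : ℝ) 1)
    (hhsupp : ∀ s : ℝ, ℓ ≤ s → h s = 0) (hh0 : h 0 = 1 / 2)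
    (hφ₀0 : φ₀ 0 = 1) (hφ₁0 : φ₁ 0 = 1)
    (hode₀ : ∀ s : ℝ, 0 ≤ s →
      HasDerivAt φ₀ (-(g (φ₀ s) * (1 - h s) + g 1 * h s) / c₀) s)
    (hode₁ : ∀ s : ℝ, 0 ≤ s →
      HasDerivAt φ₁ (-(g (φ₁ s) * (1 - h s) + g 1 * h s) / c) s)
    (hs₀ : 0 < s₀) (hs₀ℓ : s₀ ≤ ℓ)
    (hpos : ∀ s ∈ Set.Icc (0 : ℝ) s₀, 0 ≤ φ₀ s) :
    ∀ s ∈ Set.Ioc (0 : ℝ) s₀, φ₀ s < φ₁ s := by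
  have hc : 0 < c := hc₀.trans hcc
  set K : ℝ := (Lg : ℝ) / c with hKdef
  have hK0 : 0 ≤ K := div_nonneg Lg.coe_nonneg hc.le
  have ha : 0 < 1 / c₀ - 1 / c := by
    have h1 : 1 / c < 1 / c₀ := one_div_lt_one_div_of_lt hc₀ hcc
    linarith
  set a : ℝ := 1 / c₀ - 1 / c with hadef
  set w : ℝ → ℝ := fun s => φ₁ s - φ₀ s with hwdef
  set F : ℝ → ℝ := fun s => g (φ₀ s) * (1 - h s) + g 1 * h s with hFdef
  set D : ℝ → ℝ :=
    fun s => F s / c₀ - (g (φ₁ s) * (1 - h s) + g 1 * h s) / c with hDdef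
  have hw0 : w 0 = 0 := by simp [hwdef, hφ₀0, hφ₁0]
  have hFnn : ∀ s, 0 ≤ s → 0 ≤ F s := by
    intro s hs
    obtain ⟨hh1, hh2⟩ := hh01 s hs
    have h1 := hgnn (φ₀ s); have h2 := hgnn 1
    have : (0:ℝ) ≤ 1 - h s := by linarith
    simp only [hFdef]
    positivity
  have hwD : ∀ s, 0 ≤ s → HasDerivAt w (D s) s := by
    intro s hs
    have h1 := (hode₁ s hs).sub (hode₀ s hs)
    convert h1 using 1
    · rfl
    · rfl
    · rfl
    simp only [hDdef, hFdef]
    ring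
  have hwC : ∀ s, 0 ≤ s → ContinuousAt w s := fun s hs => (hwD s hs).continuousAt
  have key : ∀ s, 0 ≤ s → K * (-|w s|) + a * F s ≤ D s := by
    intro s hs
    obtain ⟨hh1, hh2⟩ := hh01 s hs
    have hlip : |g (φ₀ s) - g (φ₁ s)| ≤ (Lg : ℝ) * |w s| := by
      have h1 := hgLip.dist_le_mul (φ₀ s) (φ₁ s)
      rw [Real.dist_eq, Real.dist_eq] at h1
      have h2 : |w s| = |φ₀ s - φ₁ s| := by
        simp only [hwdef]; rw [abs_sub_comm]
      rw [h2]; exact h1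
    obtain ⟨hl1, hl2⟩ := abs_le.mp hlip
    have habs : 0 ≤ |w s| := abs_nonneg _
    have hLg : (0:ℝ) ≤ Lg := Lg.coe_nonneg
    have h2 : -((Lg : ℝ) * |w s|) ≤ (g (φ₀ s) - g (φ₁ s)) * (1 - h s) := by
      nlinarith
    have hDeq : D s = ((g (φ₀ s) - g (φ₁ s)) * (1 - h s)) / c + a * F s := by
      simp only [hDdef, hadef, hFdef]
      field_simp
      ring
    rw [hDeq]
    have h3 : (-((Lg : ℝ) * |w s|)) / c ≤ ((g (φ₀ s) - g (φ₁ s)) * (1 - h s)) / c :=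
      (div_le_div_iff_of_pos_right hc).mpr h2
    have h4 : K * (-|w s|) = (-((Lg : ℝ) * |w s|)) / c := by
      rw [hKdef]; ring
    linarith
  -- Part A : w ≥ 0 on [0, s₀]
  have hwnn : ∀ s ∈ Set.Icc (0:ℝ) s₀, 0 ≤ w s := by
    by_contra hcon
    push_neg at hcon
    obtain ⟨t, ht, hwt⟩ := hcon
    have ht0 : 0 ≤ t := ht.1
    set S : Set ℝ := Set.Icc 0 t ∩ w ⁻¹' Set.Ici 0 with hSdef
    have hwCon : ContinuousOn w (Set.Icc (0:ℝ) t) :=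
      fun s hs => (hwC s hs.1).continuousWithinAt
    have hScl : IsClosed S :=
      hwCon.preimage_isClosed_of_isClosed isClosed_Icc isClosed_Ici
    have hS0 : (0:ℝ) ∈ S := ⟨⟨le_refl 0, ht0⟩, by simp [hw0]⟩
    have hSbdd : BddAbove S := ⟨t, fun s hs => hs.1.2⟩
    set t₀ := sSup S with ht₀def
    have ht₀S : t₀ ∈ S := hScl.csSup_mem ⟨0, hS0⟩ hSbdd
    have ht₀0 : 0 ≤ t₀ := ht₀S.1.1
    have hwt₀ : 0 ≤ w t₀ := ht₀S.2
    have ht₀t : t₀ < t := by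
      rcases lt_or_eq_of_le ht₀S.1.2 with hlt | heq
      · exact hlt
      · exfalso; rw [heq] at hwt₀; linarith
    have hneg : ∀ s, t₀ < s → s ≤ t → w s < 0 := by
      intro s h1 h2
      by_contra h3
      push_neg at h3
      have hmem : s ∈ S := ⟨⟨ht₀0.trans h1.le, h2⟩, h3⟩
      exact absurd (le_csSup hSbdd hmem) (not_le.mpr h1)
    set G : ℝ → ℝ := fun s => w s * Real.exp (-K * s) with hGdef
    have hGD : ∀ s, 0 ≤ s → HasDerivAt G
        (D s * Real.exp (-K * s) + w s * (-K * Real.exp (-K * s))) s := by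
      intro s hs
      have he : HasDerivAt (fun u : ℝ => Real.exp (-K * u)) (-K * Real.exp (-K * s)) s := by
        have := ((hasDerivAt_id s).const_mul (-K)).exp
        simpa [mul_comm] using this
      exact (hwD s hs).mul he
    have hmono : MonotoneOn G (Set.Icc t₀ t) := by
      apply monotoneOn_of_deriv_nonneg (convex_Icc _ _)
      · intro s hs
        exact ((hGD s (ht₀0.trans hs.1)).continuousAt).continuousWithinAt
      · intro s hs
        rw [interior_Icc] at hs
        exact ((hGD s (ht₀0.trans hs.1.le)).differentiableAt).differentiableWithinAt
      · intro s hs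
        rw [interior_Icc] at hs
        have hs0 : 0 ≤ s := ht₀0.trans hs.1.le
        rw [(hGD s hs0).deriv]
        have hwsneg : w s < 0 := hneg s hs.1 hs.2.le
        have hk := key s hs0
        rw [abs_of_neg hwsneg, neg_neg] at hk
        have hF := hFnn s hs0
        have hexp := Real.exp_pos (-K * s)
        have h5 : 0 ≤ D s - K * w s := by linarith [mul_nonneg ha.le hF]
        have heq : D s * Real.exp (-K * s) + w s * (-K * Real.exp (-K * s))
            = (D s - K * w s) * Real.exp (-K * s) := by ring
        rw [heq]
        exact mul_nonneg h5 hexp.le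
    have hle := hmono ⟨le_refl t₀, ht₀t.le⟩ ⟨ht₀t.le, le_refl t⟩ ht₀t.le
    have hGt₀ : 0 ≤ G t₀ := mul_nonneg hwt₀ (Real.exp_pos _).le
    have hGt : G t < 0 := mul_neg_of_neg_of_pos hwt (Real.exp_pos _)
    linarith
  -- choose δ₀ where h is bounded below
  obtain ⟨δ, hδ0, hδ⟩ :=
    Metric.continuousWithinAt_iff.mp (hhcont 0 Set.self_mem_Ici) (1/4) (by norm_num)
  set δ₀ : ℝ := min (δ / 2) s₀ with hδ₀def
  have hδ₀pos : 0 < δ₀ := lt_min (by linarith) hs₀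
  have hδ₀s₀ : δ₀ ≤ s₀ := min_le_right _ _
  have hhδ₀ : 1 / 4 < h δ₀ := by
    have h1 : δ₀ ∈ Set.Ici (0:ℝ) := hδ₀pos.le
    have h2 : dist δ₀ 0 < δ := by
      rw [Real.dist_eq, sub_zero, abs_of_pos hδ₀pos]
      calc δ₀ ≤ δ / 2 := min_le_left _ _
        _ < δ := by linarith
    have h3 := hδ h1 h2
    rw [Real.dist_eq, hh0] at h3
    have h4 := abs_lt.mp h3
    linarith [h4.1]
  have hg1 : r ≤ g 1 := by simpa using hglow 1 one_pos le_rfl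
  set G₂ : ℝ → ℝ := fun s => w s * Real.exp (K * s) with hG₂def
  have hG₂D : ∀ s, 0 ≤ s → HasDerivAt G₂
      (D s * Real.exp (K * s) + w s * (K * Real.exp (K * s))) s := by
    intro s hs
    have he : HasDerivAt (fun u : ℝ => Real.exp (K * u)) (K * Real.exp (K * s)) s := by
      have := ((hasDerivAt_id s).const_mul K).exp
      simpa [mul_comm] using this
    exact (hwD s hs).mul he
  have hmono₂ : MonotoneOn G₂ (Set.Icc (0:ℝ) s₀) := by
    apply monotoneOn_of_deriv_nonneg (convex_Icc _ _)
    · intro s hs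
      exact ((hG₂D s hs.1).continuousAt).continuousWithinAt
    · intro s hs
      rw [interior_Icc] at hs
      exact ((hG₂D s hs.1.le).differentiableAt).differentiableWithinAt
    · intro s hs
      rw [interior_Icc] at hs
      have hs0 : 0 ≤ s := hs.1.le
      rw [(hG₂D s hs0).deriv]
      have hws : 0 ≤ w s := hwnn s ⟨hs0, hs.2.le⟩
      have hk := key s hs0
      rw [abs_of_nonneg hws] at hk
      have hF := hFnn s hs0
      have hexp := Real.exp_pos (K * s)
      have h5 : 0 ≤ D s + K * w s := by linarith [mul_nonneg ha.le hF]
      have heq : D s * Real.exp (K * s) + w s * (K * Real.exp (K * s))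
          = (D s + K * w s) * Real.exp (K * s) := by ring
      rw [heq]
      exact mul_nonneg h5 hexp.le
  have hstrict : StrictMonoOn G₂ (Set.Icc (0:ℝ) δ₀) := by
    apply strictMonoOn_of_deriv_pos (convex_Icc _ _)
    · intro s hs
      exact ((hG₂D s hs.1).continuousAt).continuousWithinAt
    · intro s hs
      rw [interior_Icc] at hs
      have hs0 : 0 ≤ s := hs.1.le
      rw [(hG₂D s hs0).deriv]
      have hws : 0 ≤ w s := hwnn s ⟨hs0, hs.2.le.trans hδ₀s₀⟩
      have hk := key s hs0
      rw [abs_of_nonneg hws] at hk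
      have hexp := Real.exp_pos (K * s)
      obtain ⟨hh1, hh2⟩ := hh01 s hs0
      have hhs : h δ₀ ≤ h s := hhanti hs0 hδ₀pos.le hs.2.le
      have hFpos : 0 < F s := by
        have h6 := hgnn (φ₀ s)
        have h7 : (0:ℝ) ≤ 1 - h s := by linarith
        have h8 : 0 < g 1 * h s := mul_pos (hr.trans_le hg1) (by linarith)
        have h9 := mul_nonneg h6 h7
        simp only [hFdef]
        linarith
      have h5 : 0 < D s + K * w s := by linarith [mul_pos ha hFpos]
      have heq : D s * Real.exp (K * s) + w s * (K * Real.exp (K * s))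
          = (D s + K * w s) * Real.exp (K * s) := by ring
      rw [heq]
      exact mul_pos h5 hexp
  intro s hs
  set m : ℝ := min s δ₀ with hmdef
  have hm0 : 0 < m := lt_min hs.1 hδ₀pos
  have hmδ₀ : m ≤ δ₀ := min_le_right _ _
  have hms : m ≤ s := min_le_left _ _
  have h1 : G₂ 0 < G₂ m :=
    hstrict ⟨le_refl 0, hδ₀pos.le⟩ ⟨hm0.le, hmδ₀⟩ hm0
  have h2 : G₂ m ≤ G₂ s :=
    hmono₂ ⟨hm0.le, hms.trans hs.2⟩ ⟨hs.1.le, hs.2⟩ hms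
  have hG₂0 : G₂ 0 = 0 := by simp [hG₂def, hw0]
  have hpos' : 0 < w s * Real.exp (K * s) := by
    have h3 : 0 < G₂ s := by linarith
    exact h3
  have hws : 0 < w s := by
    rcases mul_pos_iff.mp hpos' with ⟨h, _⟩ | ⟨_, hneg⟩
    · exact h
    · exact absurd (Real.exp_pos (K * s)) (not_lt.mpr hneg.le)
  simp only [hwdef] at hws
  linarith
end

section
/- Existence and uniqueness of minimal speed: under the above assumptions on g and h, there exists a unique c* > 0 such that φ_{c*}(ℓ) = 0, φ_c(ℓ) > 0 for all c > c*, and φ_c(ℓ) < 0 for all c < c*. Moreover g(1)·∫₀^ℓ h(s) ds ≤ c* ≤ ℓ·sup_{[0,1]} g. -/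
open Set

/-- endpoint inequality from nonnegative derivative -/
private lemma aux_endpoint {F : ℝ → ℝ} {a b : ℝ} (hab : a ≤ b)
    (hc : ContinuousOn F (Set.Icc a b))
    (hd : ∀ x ∈ Set.Ioo a b, ∃ d, HasDerivAt F d x ∧ 0 ≤ d) :
    F a ≤ F b := by
  have hmono : MonotoneOn F (Set.Icc a b) := by
    apply monotoneOn_of_deriv_nonneg (convex_Icc a b) hc
    · intro x hx
      rw [interior_Icc] at hx
      obtain ⟨d, hd1, _⟩ := hd x hx
      exact hd1.differentiableAt.differentiableWithinAt
    · intro x hx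
      rw [interior_Icc] at hx
      obtain ⟨d, hd1, hd2⟩ := hd x hx
      rw [hd1.deriv]; exact hd2
  exact hmono (Set.left_mem_Icc.2 hab) (Set.right_mem_Icc.2 hab) hab

/-- FTC facts for the primitive of h -/
private lemma aux_Hd {h : ℝ → ℝ} {ℓ : ℝ} (hhcont : ContinuousOn h (Set.Ici 0)) :
    ∀ t ∈ Set.Ioo (0:ℝ) ℓ, HasDerivAt (fun u => ∫ s in (0:ℝ)..u, h s) (h t) t := by
  intro t ht
  have hsub : Set.uIcc (0:ℝ) t ⊆ Set.Ici 0 := by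
    rw [Set.uIcc_of_le ht.1.le]; exact fun x hx => hx.1
  refine intervalIntegral.integral_hasDerivAt_right
    ((hhcont.mono hsub).intervalIntegrable) ?_ ?_
  · exact (hhcont.mono (fun x (hx : x ∈ Set.Ioi 0) => le_of_lt hx)).stronglyMeasurableAtFilter
      isOpen_Ioi t ht.1
  · exact (hhcont t (le_of_lt ht.1)).continuousAt (Ici_mem_nhds ht.1)

private lemma aux_Hc {h : ℝ → ℝ} {ℓ : ℝ} (hℓ : 0 < ℓ) (hhcont : ContinuousOn h (Set.Ici 0)) :
    ContinuousOn (fun u => ∫ s in (0:ℝ)..u, h s) (Set.Icc 0 ℓ) := by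
  have : MeasureTheory.IntegrableOn h (Set.uIcc (0:ℝ) ℓ) := by
    rw [Set.uIcc_of_le hℓ.le]
    exact (hhcont.mono (fun x hx => hx.1)).integrableOn_Icc
  simpa [Set.uIcc_of_le hℓ.le] using intervalIntegral.continuousOn_primitive_interval this

/-- weak comparison in c -/
private lemma aux_cmp {g h : ℝ → ℝ} {φ : ℝ → ℝ → ℝ} {ℓ : ℝ} {Lg : NNReal}
    (hgLip : LipschitzWith Lg g)
    (hgnn : ∀ v : ℝ, 0 ≤ g v)
    (hh01 : ∀ s : ℝ, 0 ≤ s → h s ∈ Set.Icc (0 : ℝ) 1)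
    (hφ0 : ∀ c : ℝ, 0 < c → φ c 0 = 1)
    (hode : ∀ c : ℝ, 0 < c → ∀ s : ℝ, 0 ≤ s →
      HasDerivAt (φ c) (-(g (φ c s) * (1 - h s) + g 1 * h s) / c) s)
    (hLg : 0 < (Lg:ℝ))
    {c1 c2 : ℝ} (hc1 : 0 < c1) (hc12 : c1 ≤ c2) :
    ∀ s ∈ Set.Icc (0:ℝ) ℓ, φ c1 s ≤ φ c2 s := by
  have hc2 : 0 < c2 := lt_of_lt_of_le hc1 hc12
  set K : ℝ := Lg / c1 with hK
  have hKpos : 0 < K := div_pos hLg hc1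
  have main : ∀ ε : ℝ, 0 < ε → ∀ s ∈ Set.Icc (0:ℝ) ℓ,
      φ c1 s ≤ φ c2 s + ε * Real.exp (2*K*s) := by
    intro ε hε
    have hcont1 : ContinuousOn (φ c1) (Set.Icc 0 ℓ) :=
      fun s hs => ((hode c1 hc1 s hs.1).continuousAt).continuousWithinAt
    have hcont2 : ContinuousOn (fun s => φ c2 s + ε * Real.exp (2*K*s)) (Set.Icc 0 ℓ) := by
      apply ContinuousOn.add (fun s hs => ((hode c2 hc2 s hs.1).continuousAt).continuousWithinAt)
      exact Continuous.continuousOn (by continuity)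
    intro s hs
    refine image_le_of_deriv_right_lt_deriv_boundary'
      (f' := fun x => -(g (φ c1 x) * (1 - h x) + g 1 * h x) / c1)
      (B' := fun x => -(g (φ c2 x) * (1 - h x) + g 1 * h x) / c2 + ε * (Real.exp (2*K*x) * (2*K)))
      hcont1 (fun x hx => (hode c1 hc1 x hx.1).hasDerivWithinAt) ?_ hcont2
      (fun x hx => ?_) (fun x hx hcontact => ?_) hs
    · rw [hφ0 c1 hc1, hφ0 c2 hc2]
      nlinarith [Real.exp_pos (2*K*(0:ℝ)), mul_pos hε (Real.exp_pos (2*K*(0:ℝ)))]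
    · have hB2 : HasDerivAt (fun x : ℝ => 2*K*x) (2*K) x := by
        simpa using (hasDerivAt_id x).const_mul (2*K)
      have hBexp : HasDerivAt (fun x : ℝ => Real.exp (2*K*x)) (Real.exp (2*K*x) * (2*K)) x :=
        (Real.hasDerivAt_exp (2*K*x)).comp x hB2
      exact ((hode c2 hc2 x hx.1).add (hBexp.const_mul ε)).hasDerivWithinAt
    · -- contact inequality
      set u1 := φ c1 x with hu1
      set u2 := φ c2 x with hu2
      set e := ε * Real.exp (2*K*x) with he
      have hepos : 0 < e := mul_pos hε (Real.exp_pos _)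
      have h1mh0 : 0 ≤ 1 - h x := by linarith [(hh01 x hx.1).2]
      have h1mh1 : 1 - h x ≤ 1 := by linarith [(hh01 x hx.1).1]
      have hgd : g u2 - g u1 ≤ (Lg:ℝ) * e := by
        have := hgLip.dist_le_mul u2 u1
        rw [Real.dist_eq, Real.dist_eq] at this
        have habs : |u2 - u1| = e := by
          have h21 : u2 - u1 = -e := by rw [hcontact]; ring
          rw [h21, abs_neg, abs_of_nonneg hepos.le]
        calc g u2 - g u1 ≤ |g u2 - g u1| := le_abs_self _
          _ ≤ (Lg:ℝ) * |u2 - u1| := this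
          _ = (Lg:ℝ) * e := by rw [habs]
      have hLge : 0 ≤ (Lg:ℝ) * e := by positivity
      have hprod : (g u2 - g u1) * (1 - h x) ≤ (Lg:ℝ) * e := by
        nlinarith [mul_le_mul_of_nonneg_right hgd h1mh0]
      set N1 := g u1 * (1 - h x) + g 1 * h x with hN1
      set N2 := g u2 * (1 - h x) + g 1 * h x with hN2
      have hN2nn : 0 ≤ N2 := by
        have := hgnn u2; have := hgnn 1
        have := (hh01 x hx.1).1
        positivity
      have hN1ge : N2 - (Lg:ℝ) * e ≤ N1 := by
        have : N2 - N1 = (g u2 - g u1) * (1 - h x) := by rw [hN1, hN2]; ring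
        linarith
      have hA : -N1/c1 ≤ ((Lg:ℝ)*e - N2)/c1 := by
        apply (div_le_div_iff_of_pos_right hc1).2; linarith
      have hC : N2/c2 ≤ N2/c1 := div_le_div_of_nonneg_left hN2nn hc1 hc12
      have hrw : ε * (Real.exp (2*K*x) * (2*K)) = 2*((Lg:ℝ)*e/c1) := by
        rw [he, hK]; field_simp
      have hpos : 0 < (Lg:ℝ)*e/c1 := by positivity
      have := sub_div ((Lg:ℝ)*e) N2 c1
      calc -N1/c1 ≤ ((Lg:ℝ)*e - N2)/c1 := hA
        _ = (Lg:ℝ)*e/c1 - N2/c1 := sub_div _ _ _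
        _ ≤ (Lg:ℝ)*e/c1 - N2/c2 := by linarith
        _ < 2*((Lg:ℝ)*e/c1) - N2/c2 := by linarith
        _ = -N2/c2 + ε * (Real.exp (2*K*x) * (2*K)) := by rw [hrw]; ring
  intro s hs
  by_contra hlt
  push_neg at hlt
  have hd : 0 < (φ c1 s - φ c2 s) / (2 * Real.exp (2*K*s)) := by
    have := Real.exp_pos (2*K*s); apply div_pos (by linarith) (by linarith)
  have := main _ hd s hs
  rw [div_mul_eq_mul_div, mul_comm (2 : ℝ) (Real.exp (2*K*s)), ← div_div,
    mul_div_cancel_right₀ _ (ne_of_gt (Real.exp_pos (2*K*s)))] at this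
  linarith

set_option maxHeartbeats 1000000

private lemma aux_strict {g h : ℝ → ℝ} {φ : ℝ → ℝ → ℝ} {ℓ : ℝ} {Lg : NNReal}
    (hℓ : 0 < ℓ)
    (hgLip : LipschitzWith Lg g)
    (hgnn : ∀ v : ℝ, 0 ≤ g v)
    (hhcont : ContinuousOn h (Set.Ici 0))
    (hh01 : ∀ s : ℝ, 0 ≤ s → h s ∈ Set.Icc (0 : ℝ) 1)
    (hφ0 : ∀ c : ℝ, 0 < c → φ c 0 = 1)
    (hode : ∀ c : ℝ, 0 < c → ∀ s : ℝ, 0 ≤ s →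
      HasDerivAt (φ c) (-(g (φ c s) * (1 - h s) + g 1 * h s) / c) s)
    (hLg : 0 < (Lg:ℝ)) (hg1 : 0 < g 1)
    (hhint : 0 < ∫ s in (0:ℝ)..ℓ, h s)
    {c1 c2 : ℝ} (hc1 : 0 < c1) (hc12 : c1 < c2) :
    φ c1 ℓ < φ c2 ℓ := by
  have hc2 : 0 < c2 := hc1.trans hc12
  set K : ℝ := Lg / c1 with hK
  have hKpos : 0 < K := div_pos hLg hc1
  set Δ : ℝ := 1/c1 - 1/c2 with hΔ
  have hΔpos : 0 < Δ := by
    rw [hΔ, sub_pos]; exact one_div_lt_one_div_of_lt hc1 hc12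
  have hend : ((φ c2 0 - φ c1 0) * Real.exp (K*0) - g 1 * Δ * ∫ s in (0:ℝ)..(0:ℝ), h s)
      ≤ (φ c2 ℓ - φ c1 ℓ) * Real.exp (K*ℓ) - g 1 * Δ * ∫ s in (0:ℝ)..ℓ, h s := by
    have hcont1 : ContinuousOn (φ c1) (Set.Icc 0 ℓ) :=
      fun s hs => ((hode c1 hc1 s hs.1).continuousAt).continuousWithinAt
    have hcont2 : ContinuousOn (φ c2) (Set.Icc 0 ℓ) :=
      fun s hs => ((hode c2 hc2 s hs.1).continuousAt).continuousWithinAt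
    apply aux_endpoint (F := fun t => (φ c2 t - φ c1 t) * Real.exp (K*t)
        - g 1 * Δ * ∫ s in (0:ℝ)..t, h s) hℓ.le
    · apply ContinuousOn.sub
      · exact (hcont2.sub hcont1).mul (Continuous.continuousOn (by continuity))
      · exact continuousOn_const.mul (aux_Hc hℓ hhcont)
    intro x hx
    have hx0 : (0:ℝ) ≤ x := hx.1.le
    have hxI : x ∈ Set.Icc (0:ℝ) ℓ := ⟨hx.1.le, hx.2.le⟩
    have hexp : HasDerivAt (fun t : ℝ => Real.exp (K*t)) (Real.exp (K*x) * K) x :=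
      (Real.hasDerivAt_exp (K*x)).comp x (by simpa using (hasDerivAt_id x).const_mul K)
    refine ⟨(-(g (φ c2 x) * (1 - h x) + g 1 * h x) / c2
        - -(g (φ c1 x) * (1 - h x) + g 1 * h x) / c1) * Real.exp (K*x)
        + (φ c2 x - φ c1 x) * (Real.exp (K*x) * K) - g 1 * Δ * h x, ?_, ?_⟩
    · exact (((hode c2 hc2 x hx0).sub (hode c1 hc1 x hx0)).mul hexp).sub
        ((aux_Hd hhcont x hx).const_mul (g 1 * Δ))
    · -- nonnegativity of the derivative
      have hψ0 : 0 ≤ φ c2 x - φ c1 x :=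
        sub_nonneg.2 (aux_cmp (ℓ := ℓ) hgLip hgnn hh01 hφ0 hode hLg hc1 hc12.le x hxI)
      set u1 := φ c1 x with hu1
      set u2 := φ c2 x with hu2
      set E : ℝ := Real.exp (K*x) with hE
      have hE1 : (1:ℝ) ≤ E := by
        rw [hE]; exact Real.one_le_exp (mul_nonneg hKpos.le hx0)
      have hEpos : (0:ℝ) < E := lt_of_lt_of_le one_pos hE1
      set N1 := g u1 * (1 - h x) + g 1 * h x with hN1
      set N2 := g u2 * (1 - h x) + g 1 * h x with hN2
      have h1mh0 : 0 ≤ 1 - h x := by linarith [(hh01 x hx0).2]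
      have hhx0 : 0 ≤ h x := (hh01 x hx0).1
      clear_value u1 u2 E N1 N2 K Δ
      have hgd : -((Lg:ℝ) * (u2 - u1)) ≤ g u1 - g u2 := by
        have hl := hgLip.dist_le_mul u1 u2
        rw [Real.dist_eq, Real.dist_eq] at hl
        have habs : |u1 - u2| = u2 - u1 := by rw [abs_sub_comm, abs_of_nonneg hψ0]
        rw [habs] at hl
        linarith [abs_le.mp hl]
      have hLψ : 0 ≤ (Lg:ℝ) * (u2 - u1) := mul_nonneg (by positivity) hψ0
      have hNd : -((Lg:ℝ) * (u2 - u1)) ≤ N1 - N2 := by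
        have hEq : N1 - N2 = (g u1 - g u2) * (1 - h x) := by rw [hN1, hN2]; ring
        nlinarith [mul_le_mul_of_nonneg_right hgd h1mh0]
      have key1 : -(K*(u2 - u1)) ≤ (N1 - N2)/c1 := by
        have h1 : -((Lg:ℝ)*(u2 - u1))/c1 ≤ (N1 - N2)/c1 :=
          (div_le_div_iff_of_pos_right hc1).2 hNd
        have h2 : -((Lg:ℝ)*(u2 - u1))/c1 = -(K*(u2 - u1)) := by rw [hK]; ring
        linarith
      have hg1h : g 1 * h x ≤ N2 := by
        nlinarith [mul_nonneg (hgnn u2) h1mh0]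
      have key2 : g 1 * h x * Δ ≤ N2 * Δ := mul_le_mul_of_nonneg_right hg1h hΔpos.le
      have hsum : -N2/c2 - (-N1/c1) = (N1 - N2)/c1 + N2*Δ := by
        rw [hΔ]; field_simp; ring
      have hstep : g 1 * h x * Δ ≤ (-N2/c2 - (-N1/c1)) + K*(u2 - u1) := by
        rw [hsum]; linarith
      have hnn : 0 ≤ g 1 * h x * Δ := mul_nonneg (mul_nonneg hg1.le hhx0) hΔpos.le
      have hfin : g 1 * h x * Δ * E ≤ ((-N2/c2 - (-N1/c1)) + K*(u2 - u1)) * E :=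
        mul_le_mul_of_nonneg_right hstep hEpos.le
      have hfin2 : g 1 * h x * Δ * 1 ≤ g 1 * h x * Δ * E := mul_le_mul_of_nonneg_left hE1 hnn
      nlinarith [hfin, hfin2]
  rw [hφ0 c1 hc1, hφ0 c2 hc2, intervalIntegral.integral_same] at hend
  simp only [sub_self, zero_mul, mul_zero, sub_zero] at hend
  have hIpos : 0 < g 1 * Δ * ∫ s in (0:ℝ)..ℓ, h s :=
    mul_pos (mul_pos hg1 hΔpos) hhint
  by_contra hle
  push_neg at hle
  have hnp : (φ c2 ℓ - φ c1 ℓ) * Real.exp (K*ℓ) ≤ 0 := by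
    have := mul_le_mul_of_nonneg_right (show φ c2 ℓ - φ c1 ℓ ≤ 0 by linarith)
      (Real.exp_pos (K*ℓ)).le
    simpa using this
  linarith

private lemma aux_cont {g h : ℝ → ℝ} {φ : ℝ → ℝ → ℝ} {ℓ : ℝ} {Lg : NNReal}
    (hℓ : 0 < ℓ)
    (hgLip : LipschitzWith Lg g)
    (hgnn : ∀ v : ℝ, 0 ≤ g v) (hgle : ∀ v : ℝ, g v ≤ g 1)
    (hh01 : ∀ s : ℝ, 0 ≤ s → h s ∈ Set.Icc (0 : ℝ) 1)
    (hφ0 : ∀ c : ℝ, 0 < c → φ c 0 = 1)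
    (hode : ∀ c : ℝ, 0 < c → ∀ s : ℝ, 0 ≤ s →
      HasDerivAt (φ c) (-(g (φ c s) * (1 - h s) + g 1 * h s) / c) s)
    (hLg : 0 < (Lg:ℝ))
    {c0 : ℝ} (hc0 : 0 < c0) :
    ContinuousAt (fun c => φ c ℓ) c0 := by
  set K : ℝ := Lg / c0 with hK
  have hKpos : 0 < K := div_pos hLg hc0
  set C : ℝ := g 1 * ((Real.exp (K*ℓ) - 1)/K) with hC
  have key : ∀ c : ℝ, 0 < c → |φ c ℓ - φ c0 ℓ| ≤ C * |1/c - 1/c0| := by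
    intro c hc
    have hgb : ∀ x ∈ Set.Icc (0:ℝ) ℓ, ‖φ c x - φ c0 x‖ ≤
        gronwallBound 0 K (g 1 * |1/c - 1/c0|) (x - 0) := by
      apply norm_le_gronwallBound_of_norm_deriv_right_le
        (f' := fun x => -(g (φ c x) * (1 - h x) + g 1 * h x) / c
          - -(g (φ c0 x) * (1 - h x) + g 1 * h x) / c0)
      · exact fun s hs =>
          (((hode c hc s hs.1).sub (hode c0 hc0 s hs.1)).continuousAt).continuousWithinAt
      · exact fun x hx => ((hode c hc x hx.1).sub (hode c0 hc0 x hx.1)).hasDerivWithinAt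
      · simp [hφ0 c hc, hφ0 c0 hc0]
      · intro x hx
        have hx0 : (0:ℝ) ≤ x := hx.1
        have h1mh0 : 0 ≤ 1 - h x := by linarith [(hh01 x hx0).2]
        have h1mh1 : 1 - h x ≤ 1 := by linarith [(hh01 x hx0).1]
        have hhx0 : 0 ≤ h x := (hh01 x hx0).1
        set uc := φ c x with huc
        set u0 := φ c0 x with hu0
        set Nc := g uc * (1 - h x) + g 1 * h x with hNc
        set N0 := g u0 * (1 - h x) + g 1 * h x with hN0
        have hNcnn : 0 ≤ Nc :=
          add_nonneg (mul_nonneg (hgnn uc) h1mh0) (mul_nonneg (le_trans (hgnn 0) (hgle 0)) hhx0)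
        have hNcle : Nc ≤ g 1 := by nlinarith [mul_le_mul_of_nonneg_right (hgle uc) h1mh0]
        have hid : -Nc/c - (-N0/c0) = (N0 - Nc)/c0 + Nc*(1/c0 - 1/c) := by
          field_simp; ring
        have hgd : |N0 - Nc| ≤ (Lg:ℝ) * |uc - u0| := by
          have hl := hgLip.dist_le_mul u0 uc
          rw [Real.dist_eq, Real.dist_eq] at hl
          have hEq : N0 - Nc = (g u0 - g uc) * (1 - h x) := by rw [hN0, hNc]; ring
          rw [hEq, abs_mul, abs_of_nonneg h1mh0, abs_sub_comm uc u0]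
          nlinarith [abs_nonneg (g u0 - g uc), abs_nonneg (u0 - uc),
            mul_le_mul_of_nonneg_right hl h1mh0, mul_nonneg (mul_nonneg Lg.coe_nonneg (abs_nonneg (u0 - uc))) hhx0]
        have h1 : |(N0 - Nc)/c0| ≤ K * |uc - u0| := by
          rw [abs_div, abs_of_pos hc0]
          have := (div_le_div_iff_of_pos_right hc0).2 hgd
          have heq : (Lg:ℝ) * |uc - u0| / c0 = K * |uc - u0| := by rw [hK]; ring
          linarith
        have h2 : |Nc * (1/c0 - 1/c)| ≤ g 1 * |1/c - 1/c0| := by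
          rw [abs_mul, abs_of_nonneg hNcnn, abs_sub_comm]
          exact mul_le_mul_of_nonneg_right hNcle (abs_nonneg _)
        calc ‖-Nc/c - (-N0/c0)‖ = |(N0 - Nc)/c0 + Nc*(1/c0 - 1/c)| := by
              rw [Real.norm_eq_abs, hid]
          _ ≤ |(N0 - Nc)/c0| + |Nc*(1/c0 - 1/c)| := abs_add_le _ _
          _ ≤ K * |uc - u0| + g 1 * |1/c - 1/c0| := add_le_add h1 h2
          _ = K * ‖φ c x - φ c0 x‖ + g 1 * |1/c - 1/c0| := by
              rw [Real.norm_eq_abs, huc, hu0]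
    have hb := hgb ℓ ⟨hℓ.le, le_rfl⟩
    rw [Real.norm_eq_abs] at hb
    rw [gronwallBound_of_K_ne_0 hKpos.ne'] at hb
    calc |φ c ℓ - φ c0 ℓ| ≤ 0 * Real.exp (K * (ℓ - 0))
          + g 1 * |1/c - 1/c0| / K * (Real.exp (K * (ℓ - 0)) - 1) := hb
      _ = C * |1/c - 1/c0| := by rw [hC]; field_simp; ring
  have h0 : Filter.Tendsto (fun c : ℝ => C * |1/c - 1/c0|) (nhds c0) (nhds 0) := by
    have hcont : ContinuousAt (fun c : ℝ => C * |1/c - 1/c0|) c0 := by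
      apply ContinuousAt.mul continuousAt_const
      apply ContinuousAt.abs
      exact (ContinuousAt.div continuousAt_const continuousAt_id hc0.ne').sub continuousAt_const
    have hval : C * |1/c0 - 1/c0| = 0 := by simp
    simpa [hval] using hcont.tendsto
  have hev : ∀ᶠ c in nhds c0, ‖φ c ℓ - φ c0 ℓ‖ ≤ C * |1/c - 1/c0| := by
    filter_upwards [isOpen_Ioi.mem_nhds (Set.mem_Ioi.2 hc0)] with c hc
    rw [Real.norm_eq_abs]
    exact key c hc
  have := squeeze_zero_norm' hev h0
  rw [ContinuousAt]
  exact tendsto_sub_nhds_zero_iff.mp this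

theorem stmt_10 (g h : ℝ → ℝ) (φ : ℝ → ℝ → ℝ) (r ℓ : ℝ) (Lg : NNReal)
    (hr : 0 < r) (hℓ : 0 < ℓ)
    (hgLip : LipschitzWith Lg g) (hg0 : g 0 = 0)
    (hgnn : ∀ v : ℝ, 0 ≤ g v) (hgle : ∀ v : ℝ, g v ≤ g 1)
    (hglow : ∀ v : ℝ, 0 < v → v ≤ 1 → r * v ≤ g v)
    (hhcont : ContinuousOn h (Set.Ici 0)) (hhanti : AntitoneOn h (Set.Ici 0))
    (hh01 : ∀ s : ℝ, 0 ≤ s → h s ∈ Set.Icc (0 : ℝ) 1)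
    (hhsupp : ∀ s : ℝ, ℓ ≤ s → h s = 0)
    (hhint : 0 < ∫ s in (0 : ℝ)..ℓ, h s)
    (hφ0 : ∀ c : ℝ, 0 < c → φ c 0 = 1)
    (hode : ∀ c : ℝ, 0 < c → ∀ s : ℝ, 0 ≤ s →
      HasDerivAt (φ c) (-(g (φ c s) * (1 - h s) + g 1 * h s) / c) s) :
    ∃! cstar : ℝ, 0 < cstar ∧ φ cstar ℓ = 0 ∧
      (∀ c : ℝ, cstar < c → 0 < φ c ℓ) ∧
      (∀ c : ℝ, 0 < c → c < cstar → φ c ℓ < 0) ∧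
      g 1 * (∫ s in (0 : ℝ)..ℓ, h s) ≤ cstar ∧ cstar ≤ ℓ * g 1 := by
  have hg1 : 0 < g 1 := lt_of_lt_of_le hr (by simpa using hglow 1 one_pos le_rfl)
  have hLg : 0 < (Lg:ℝ) := by
    have hd := hgLip.dist_le_mul 1 0
    rw [Real.dist_eq, Real.dist_eq, hg0, sub_zero, abs_of_pos hg1] at hd
    have h10 : |(1:ℝ) - 0| = 1 := by norm_num
    rw [h10, mul_one] at hd
    linarith
  -- upper bound : φ c ℓ ≤ 1 - g 1 * I / c
  have hub : ∀ c : ℝ, 0 < c → φ c ℓ ≤ 1 - g 1 * (∫ s in (0:ℝ)..ℓ, h s) / c := by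
    intro c hc
    have hend : -(φ c 0) - (g 1/c) * (∫ s in (0:ℝ)..(0:ℝ), h s)
        ≤ -(φ c ℓ) - (g 1/c) * (∫ s in (0:ℝ)..ℓ, h s) := by
      apply aux_endpoint (F := fun t => -(φ c t) - (g 1/c) * ∫ s in (0:ℝ)..t, h s) hℓ.le
      · exact (ContinuousOn.neg
            (fun s hs => ((hode c hc s hs.1).continuousAt).continuousWithinAt)).sub
          (continuousOn_const.mul (aux_Hc hℓ hhcont))
      · intro x hx
        refine ⟨-(-(g (φ c x) * (1 - h x) + g 1 * h x) / c) - (g 1/c) * h x, ?_, ?_⟩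
        · exact ((hode c hc x hx.1.le).neg).sub ((aux_Hd hhcont x hx).const_mul (g 1/c))
        · have h1mh0 : 0 ≤ 1 - h x := by linarith [(hh01 x hx.1.le).2]
          have heq : -(-(g (φ c x) * (1 - h x) + g 1 * h x) / c) - (g 1/c) * h x
              = (g (φ c x) * (1 - h x)) / c := by field_simp; ring
          rw [heq]
          exact div_nonneg (mul_nonneg (hgnn _) h1mh0) hc.le
    simp only [hφ0 c hc, intervalIntegral.integral_same, mul_zero, sub_zero] at hend
    have hrw : g 1/c * (∫ s in (0:ℝ)..ℓ, h s) = g 1 * (∫ s in (0:ℝ)..ℓ, h s) / c := by ring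
    linarith
  -- lower bound : 1 - g 1 * ℓ / c ≤ φ c ℓ
  have hlb : ∀ c : ℝ, 0 < c → 1 - g 1 * ℓ / c ≤ φ c ℓ := by
    intro c hc
    have hend : φ c 0 + (g 1/c) * 0 ≤ φ c ℓ + (g 1/c) * ℓ := by
      apply aux_endpoint (F := fun t => φ c t + (g 1/c) * t) hℓ.le
      · exact ContinuousOn.add
          (fun s hs => ((hode c hc s hs.1).continuousAt).continuousWithinAt)
          (continuousOn_const.mul continuousOn_id)
      · intro x hx
        refine ⟨-(g (φ c x) * (1 - h x) + g 1 * h x) / c + (g 1/c) * 1, ?_, ?_⟩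
        · exact (hode c hc x hx.1.le).add ((hasDerivAt_id x).const_mul (g 1/c))
        · have h1mh0 : 0 ≤ 1 - h x := by linarith [(hh01 x hx.1.le).2]
          have hhx0 : 0 ≤ h x := (hh01 x hx.1.le).1
          have hNle : g (φ c x) * (1 - h x) + g 1 * h x ≤ g 1 := by
            nlinarith [mul_le_mul_of_nonneg_right (hgle (φ c x)) h1mh0]
          have heq : -(g (φ c x) * (1 - h x) + g 1 * h x) / c + (g 1/c) * 1
              = (g 1 - (g (φ c x) * (1 - h x) + g 1 * h x)) / c := by field_simp; ring
          rw [heq]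
          exact div_nonneg (by linarith) hc.le
    rw [hφ0 c hc, mul_zero, add_zero] at hend
    have hrw : g 1/c * ℓ = g 1 * ℓ / c := by ring
    linarith
  -- I ≤ ℓ
  have hint : IntervalIntegrable h MeasureTheory.volume 0 ℓ := by
    apply ContinuousOn.intervalIntegrable
    rw [Set.uIcc_of_le hℓ.le]
    exact hhcont.mono (fun x hx => hx.1)
  have hIl : (∫ s in (0:ℝ)..ℓ, h s) ≤ ℓ := by
    have h1 : (∫ s in (0:ℝ)..ℓ, h s) ≤ ∫ s in (0:ℝ)..ℓ, (1:ℝ) :=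
      intervalIntegral.integral_mono_on hℓ.le hint intervalIntegrable_const
        (fun x hx => (hh01 x hx.1).2)
    simpa using h1
  -- IVT setup
  set a : ℝ := g 1 * (∫ s in (0:ℝ)..ℓ, h s) / 2 with ha_def
  set b : ℝ := 2 * ℓ * g 1 with hb_def
  have ha : 0 < a := by
    rw [ha_def]; exact div_pos (mul_pos hg1 hhint) two_pos
  have hb : 0 < b := by rw [hb_def]; positivity
  have hab : a ≤ b := by rw [ha_def, hb_def]; nlinarith
  have hΦa : φ a ℓ < 0 := by
    have h1 := hub a ha
    have hgI : g 1 * (∫ s in (0:ℝ)..ℓ, h s) ≠ 0 := (mul_pos hg1 hhint).ne'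
    have h2 : g 1 * (∫ s in (0:ℝ)..ℓ, h s) / a = 2 := by
      rw [ha_def]; field_simp
    rw [h2] at h1
    linarith
  have hΦb : 0 < φ b ℓ := by
    have h1 := hlb b hb
    have h2 : g 1 * ℓ / b = 1/2 := by
      rw [hb_def]; field_simp
    rw [h2] at h1
    linarith
  have hcontΦ : ContinuousOn (fun c => φ c ℓ) (Set.Icc a b) := fun c hc =>
    (aux_cont hℓ hgLip hgnn hgle hh01 hφ0 hode hLg (lt_of_lt_of_le ha hc.1)).continuousWithinAt
  have hIVT := intermediate_value_Icc hab hcontΦ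
  have h0mem : (0:ℝ) ∈ Set.Icc (φ a ℓ) (φ b ℓ) := ⟨hΦa.le, hΦb.le⟩
  obtain ⟨cstar, hcmem, hceq0⟩ := hIVT h0mem
  have hceq : φ cstar ℓ = 0 := hceq0
  have hcpos : 0 < cstar := lt_of_lt_of_le ha hcmem.1
  have hmono : ∀ c1 c2 : ℝ, 0 < c1 → c1 < c2 → φ c1 ℓ < φ c2 ℓ := fun c1 c2 h1 h12 =>
    aux_strict hℓ hgLip hgnn hhcont hh01 hφ0 hode hLg hg1 hhint h1 h12
  refine ⟨cstar, ⟨hcpos, hceq, ?_, ?_, ?_, ?_⟩, ?_⟩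
  · intro c hc
    rw [← hceq]
    exact hmono cstar c hcpos hc
  · intro c hc hclt
    rw [← hceq]
    exact hmono c cstar hc hclt
  · have h1 := hub cstar hcpos
    rw [hceq] at h1
    have h2 : g 1 * (∫ s in (0:ℝ)..ℓ, h s) / cstar ≤ 1 := by linarith
    calc g 1 * (∫ s in (0:ℝ)..ℓ, h s) = g 1 * (∫ s in (0:ℝ)..ℓ, h s) / cstar * cstar := by
          field_simp
      _ ≤ 1 * cstar := mul_le_mul_of_nonneg_right h2 hcpos.le
      _ = cstar := one_mul _
  · have h1 := hlb cstar hcpos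
    rw [hceq] at h1
    have h2 : 1 ≤ g 1 * ℓ / cstar := by linarith
    have h3 := mul_le_mul_of_nonneg_right h2 hcpos.le
    rw [one_mul, div_mul_cancel₀ _ hcpos.ne'] at h3
    linarith [h3]
  · rintro c' ⟨hc'pos, hc'eq, _, _, _, _⟩
    rcases lt_trichotomy c' cstar with hlt | heq | hgt
    · have := hmono c' cstar hc'pos hlt
      rw [hc'eq, hceq] at this
      exact absurd this (lt_irrefl 0)
    · exact heq
    · have := hmono cstar c' hcpos hgt
      rw [hc'eq, hceq] at this
      exact absurd this (lt_irrefl 0)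
end

section
/- Uniform interior approximation of half-space by balls for the uniform kernel: let K = 𝟙_{B_ℓ}/|B_ℓ| in ℝ^d and let h(s) = (K*𝟙_{H})(s e₁) where H = {y₁ < 0}. Then for every δ > 0 there exists R₀ such that for all R ≥ R₀ and all x with |x| ≥ R, (1−δ)·h(|x| − R) ≤ (K * 𝟙_{B_R(0)})(x). -/
set_option maxHeartbeats 1000000

open MeasureTheory Metric Set

lemma aux_int {n : ℕ} {ℓ : ℝ} (x : EuclideanSpace ℝ (Fin (n+1)))
    (S : Set (EuclideanSpace ℝ (Fin (n+1)))) (hS : MeasurableSet S) :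
    (∫ y, (Set.indicator (ball (0:EuclideanSpace ℝ (Fin (n+1))) ℓ)
      (fun _ => ((volume (ball (0:EuclideanSpace ℝ (Fin (n+1))) ℓ)).toReal)⁻¹) (x - y)) *
      S.indicator (fun _ => (1:ℝ)) y)
    = ((volume (ball (0:EuclideanSpace ℝ (Fin (n+1))) ℓ)).toReal)⁻¹ *
      (volume (ball x ℓ ∩ S)).toReal := by
  set V := ((volume (ball (0:EuclideanSpace ℝ (Fin (n+1))) ℓ)).toReal)⁻¹ with hV
  have key : ∀ y, (Set.indicator (ball (0:EuclideanSpace ℝ (Fin (n+1))) ℓ) (fun _ => V) (x - y)) *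
      S.indicator (fun _ => (1:ℝ)) y
      = (ball x ℓ ∩ S).indicator (fun _ => V) y := by
    intro y
    have hiff : x - y ∈ ball (0:EuclideanSpace ℝ (Fin (n+1))) ℓ ↔ y ∈ ball x ℓ := by
      rw [mem_ball_zero_iff, mem_ball_iff_norm']
    by_cases h1 : y ∈ ball x ℓ
    · by_cases h2 : y ∈ S
      · rw [Set.indicator_of_mem (hiff.2 h1), Set.indicator_of_mem h2,
          Set.indicator_of_mem (Set.mem_inter h1 h2), mul_one]
      · rw [Set.indicator_of_notMem h2, mul_zero,
          Set.indicator_of_notMem (fun hc => h2 hc.2)]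
    · rw [Set.indicator_of_notMem (fun hc => h1 (hiff.1 hc)), zero_mul,
        Set.indicator_of_notMem (fun hc => h1 hc.1)]
  simp_rw [key]
  rw [integral_indicator_const _ (measurableSet_ball.inter hS), smul_eq_mul, mul_comm, measureReal_def]


lemma aux_geom {n : ℕ} {ℓ R s : ℝ} (hℓ : 0 < ℓ) (hRℓ : ℓ ≤ R) (hs : 0 ≤ s)
    (e : EuclideanSpace ℝ (Fin (n+1))) (he1 : ‖e‖ = 1)
    (x : EuclideanSpace ℝ (Fin (n+1))) (hxn : ‖x‖ = R + s) :
    ENNReal.ofReal ((R/(R+ℓ))^(n+1)) *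
      volume (ball (s•e) ℓ ∩ {z : EuclideanSpace ℝ (Fin (n+1)) | (inner ℝ z e : ℝ) < 0})
    ≤ volume (ball x ℓ ∩ ball (0 : EuclideanSpace ℝ (Fin (n+1))) R) := by
  have hR : 0 < R := lt_of_lt_of_le hℓ hRℓ
  have hRl : 0 < R + ℓ := by linarith
  set μ := R/(R+ℓ) with hμdef
  have hμ0 : 0 < μ := div_pos hR hRl
  have hμ1 : μ ≤ 1 := by rw [hμdef, div_le_one hRl]; linarith
  have hx0 : x ≠ 0 := by
    intro hc; rw [hc, norm_zero] at hxn; linarith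
  set v : EuclideanSpace ℝ (Fin (n+1)) := ‖x‖⁻¹ • x with hvdef
  have hv1 : ‖v‖ = 1 := norm_smul_inv_norm hx0
  have hxv : x = (R+s) • v := by
    rw [hvdef, smul_smul, hxn.symm, mul_inv_cancel₀ (by rw [hxn]; positivity), one_smul]
  set g := Submodule.reflection (Submodule.span ℝ {e - v})ᗮ with hgdef
  have hge : g e = v := Submodule.reflection_sub (by rw [he1, hv1])
  set A := ball (s•e) ℓ ∩ {z : EuclideanSpace ℝ (Fin (n+1)) | (inner ℝ z e : ℝ) < 0} with hAdef
  have hA : MeasurableSet A :=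
    measurableSet_ball.inter ((isOpen_lt (continuous_id.inner continuous_const)
      continuous_const).measurableSet)
  set c : EuclideanSpace ℝ (Fin (n+1)) := x - (ℓ + μ*(s-ℓ)) • v with hcdef
  set F : EuclideanSpace ℝ (Fin (n+1)) → EuclideanSpace ℝ (Fin (n+1)) :=
    fun z => c + μ • (g z) with hFdef
  -- inclusion
  have hincl : F '' A ⊆ ball x ℓ ∩ ball (0 : EuclideanSpace ℝ (Fin (n+1))) R := by
    rintro _ ⟨z, ⟨hz1, hz2⟩, rfl⟩
    rw [Set.mem_setOf_eq] at hz2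
    set t : ℝ := inner ℝ z e with htdef
    have hz1' : ‖z - s•e‖ < ℓ := mem_ball_iff_norm.1 hz1
    have hinzse : (inner ℝ (z - s•e) e : ℝ) = t - s := by
      rw [inner_sub_left, real_inner_smul_left, real_inner_self_eq_norm_sq, he1]
      ring
    have habs : |t - s| ≤ ‖z - s•e‖ := by
      have := abs_real_inner_le_norm (z - s•e) e
      rwa [hinzse, he1, mul_one] at this
    have hsl : s < ℓ := by
      have h3 : |t - s| < ℓ := lt_of_le_of_lt habs hz1'
      have h4 := abs_lt.1 h3
      linarith [h4.1]
    set w := g z with hwdef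
    have hw1 : ‖w - s•v‖ < ℓ := by
      have : w - s•v = g (z - s•e) := by rw [map_sub, _root_.map_smul, hge]
      rw [this, g.norm_map]; exact hz1'
    have hwv : (inner ℝ w v : ℝ) = t := by
      rw [hwdef, ← hge, g.inner_map_map]
    constructor
    · -- F z ∈ ball x ℓ
      rw [mem_ball_iff_norm]
      have hd : F (z) - x = μ • (w - s•v) - ((1-μ)*ℓ) • v := by
        rw [hFdef, hcdef]
        simp only []
        module
      rw [hd]
      calc ‖μ • (w - s•v) - ((1-μ)*ℓ) • v‖ ≤ ‖μ • (w - s•v)‖ + ‖((1-μ)*ℓ) • v‖ :=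
            norm_sub_le _ _
        _ = μ * ‖w - s•v‖ + (1-μ)*ℓ := by
            rw [norm_smul, norm_smul, hv1, mul_one, Real.norm_eq_abs, Real.norm_eq_abs,
              abs_of_pos hμ0, abs_of_nonneg (by nlinarith)]
        _ < μ * ℓ + (1-μ)*ℓ := by
            have := mul_lt_mul_of_pos_left hw1 hμ0
            linarith
        _ = ℓ := by ring
    · -- F z ∈ ball 0 R
      rw [mem_ball_zero_iff]
      set y := w + R•v with hydef
      have hFd : F z = (1-μ) • ((R+s-ℓ)•v) + μ • y := by
        rw [hFdef, hcdef, hxv, hydef]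
        simp only []
        module
      have hw2 : ‖w - s•v‖^2 < ℓ^2 := by nlinarith [norm_nonneg (w - s•v)]
      have e1 : ‖w - s•v‖^2 = ‖w‖^2 - 2*(s*t) + s^2 := by
        rw [norm_sub_sq_real, real_inner_smul_right, hwv, norm_smul, Real.norm_eq_abs, hv1,
          mul_one, sq_abs]
      have e2 : ‖y‖^2 = ‖w‖^2 + 2*(R*t) + R^2 := by
        rw [hydef, norm_add_sq_real, real_inner_smul_right, hwv, norm_smul, Real.norm_eq_abs,
          hv1, mul_one, sq_abs]
      have hyn2 : ‖y‖^2 < R^2 + (ℓ^2 - s^2) := by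
        have hneg : 2*t*(R+s) < 0 := by
          apply mul_neg_of_neg_of_pos (by linarith) (by linarith)
        nlinarith
      set D := (ℓ^2 - s^2)/(2*R) with hDdef
      have hD : 2*R*D = ℓ^2 - s^2 := by rw [hDdef]; field_simp
      have hD0 : 0 ≤ D := by
        apply div_nonneg (by nlinarith) (by linarith)
      have hyn : ‖y‖ < R + D := by
        apply lt_of_pow_lt_pow_left₀ 2 (by linarith)
        nlinarith [sq_nonneg D]
      have hkey : (1-μ)*(R+s-ℓ) + μ*(R + D) = R - (ℓ-s)^2/(2*(R+ℓ)) := by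
        rw [hμdef, hDdef]; field_simp; ring
      calc ‖F z‖ = ‖(1-μ) • ((R+s-ℓ)•v) + μ • y‖ := by rw [hFd]
        _ ≤ ‖(1-μ) • ((R+s-ℓ)•v)‖ + ‖μ • y‖ := norm_add_le _ _
        _ = (1-μ)*(R+s-ℓ) + μ*‖y‖ := by
            have hnv : ‖(R+s-ℓ) • v‖ = |R+s-ℓ| := by
              rw [norm_smul, hv1, Real.norm_eq_abs, mul_one]
            have n1 : ‖(1-μ) • ((R+s-ℓ)•v)‖ = (1-μ)*(R+s-ℓ) := by
              rw [norm_smul, hnv, Real.norm_eq_abs,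
                abs_of_nonneg (by linarith : (0:ℝ) ≤ 1-μ),
                abs_of_nonneg (by linarith : (0:ℝ) ≤ R+s-ℓ)]
            have n2 : ‖μ • y‖ = μ * ‖y‖ := by
              rw [norm_smul, Real.norm_eq_abs, abs_of_pos hμ0]
            rw [n1, n2]
        _ < (1-μ)*(R+s-ℓ) + μ*(R + D) := by
            have := mul_lt_mul_of_pos_left hyn hμ0
            linarith
        _ ≤ R := by
            rw [hkey]
            have : 0 ≤ (ℓ-s)^2/(2*(R+ℓ)) := by positivity
            linarith
  -- measure of image
  have himg : volume (F '' A) = ENNReal.ofReal (μ^(n+1)) * volume A := by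
    have hsplit : F '' A = (fun a => c + a) '' ((fun a => μ • a) '' (⇑g '' A)) := by
      rw [Set.image_image, Set.image_image]
    rw [hsplit, image_add_left, measure_preimage_add, image_smul,
      Measure.addHaar_smul_of_nonneg volume hμ0.le, finrank_euclideanSpace_fin,
      g.image_eq_preimage_symm, (g.symm.measurePreserving).measure_preimage hA.nullMeasurableSet]
  calc ENNReal.ofReal (μ^(n+1)) * volume A = volume (F '' A) := himg.symm
    _ ≤ volume (ball x ℓ ∩ ball (0 : EuclideanSpace ℝ (Fin (n+1))) R) := measure_mono hincl

theorem stmt_14 (d : ℕ) (ℓ : ℝ) (hℓ : 0 < ℓ)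
    (K : EuclideanSpace ℝ (Fin (d + 1)) → ℝ)
    (hKdef : ∀ z, K z =
      Set.indicator (Metric.ball (0 : EuclideanSpace ℝ (Fin (d + 1))) ℓ)
        (fun _ => ((volume (Metric.ball (0 : EuclideanSpace ℝ (Fin (d + 1))) ℓ)).toReal)⁻¹) z)
    (e : EuclideanSpace ℝ (Fin (d + 1))) (he : e = EuclideanSpace.single 0 1)
    (h : ℝ → ℝ)
    (hdef : ∀ s : ℝ, h s = ∫ y, K (s • e - y) *
      Set.indicator {z : EuclideanSpace ℝ (Fin (d + 1)) | (inner ℝ z e : ℝ) < 0}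
        (fun _ => (1 : ℝ)) y) :
    ∀ δ : ℝ, 0 < δ → ∃ R₀ : ℝ, ∀ R : ℝ, R₀ ≤ R →
      ∀ x : EuclideanSpace ℝ (Fin (d + 1)), R ≤ ‖x‖ →
        (1 - δ) * h (‖x‖ - R) ≤
          ∫ y, K (x - y) *
            Set.indicator (Metric.ball (0 : EuclideanSpace ℝ (Fin (d + 1))) R)
              (fun _ => (1 : ℝ)) y := by
  intro δ hδ
  refine ⟨max ℓ ((d+1)*ℓ/δ), ?_⟩
  intro R hR x hx
  have hRℓ : ℓ ≤ R := le_trans (le_max_left _ _) hR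
  have hR0 : (0:ℝ) < R := lt_of_lt_of_le hℓ hRℓ
  have hRl : (0:ℝ) < R + ℓ := by linarith
  set s := ‖x‖ - R with hsdef
  have hs0 : 0 ≤ s := by simp only [hsdef]; linarith
  have hxn : ‖x‖ = R + s := by rw [hsdef]; ring
  have he1 : ‖e‖ = 1 := by rw [he, EuclideanSpace.norm_single, norm_one]
  have hS : MeasurableSet {z : EuclideanSpace ℝ (Fin (d + 1)) | (inner ℝ z e : ℝ) < 0} :=
    (isOpen_lt (continuous_id.inner continuous_const) continuous_const).measurableSet
  set V := ((volume (Metric.ball (0 : EuclideanSpace ℝ (Fin (d + 1))) ℓ)).toReal)⁻¹ with hVdef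
  have hint1 : h s = V * (volume (Metric.ball (s•e) ℓ ∩
      {z : EuclideanSpace ℝ (Fin (d + 1)) | (inner ℝ z e : ℝ) < 0})).toReal := by
    rw [hdef]
    simp only [hKdef]
    exact aux_int (s•e) _ hS
  have hint2 : (∫ y, K (x - y) *
      Set.indicator (Metric.ball (0 : EuclideanSpace ℝ (Fin (d + 1))) R)
        (fun _ => (1 : ℝ)) y)
      = V * (volume (Metric.ball x ℓ ∩ Metric.ball (0 : EuclideanSpace ℝ (Fin (d+1))) R)).toReal := by
    simp only [hKdef]
    exact aux_int x _ measurableSet_ball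
  rw [hint1, hint2]
  set μ := R/(R+ℓ) with hμdef
  have hμ0 : 0 < μ := div_pos hR0 hRl
  have geom := aux_geom hℓ hRℓ hs0 e he1 x hxn
  have hfin : volume (Metric.ball x ℓ ∩ Metric.ball (0 : EuclideanSpace ℝ (Fin (d+1))) R) ≠ ⊤ :=
    ne_of_lt (lt_of_le_of_lt (measure_mono Set.inter_subset_left) measure_ball_lt_top)
  have htr : μ^(d+1) * (volume (Metric.ball (s•e) ℓ ∩
      {z : EuclideanSpace ℝ (Fin (d + 1)) | (inner ℝ z e : ℝ) < 0})).toReal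
      ≤ (volume (Metric.ball x ℓ ∩ Metric.ball (0 : EuclideanSpace ℝ (Fin (d+1))) R)).toReal := by
    have h1 := ENNReal.toReal_mono hfin geom
    rwa [ENNReal.toReal_mul, ENNReal.toReal_ofReal (by positivity)] at h1
  have hμδ : 1 - δ ≤ μ^(d+1) := by
    have hRδ : (d+1:ℝ)*ℓ/δ ≤ R := le_trans (le_max_right _ _) hR
    have hRδ' : (d+1:ℝ)*ℓ ≤ δ*R := by
      rw [div_le_iff₀ hδ] at hRδ; linarith
    have hb := one_add_mul_le_pow (a := μ - 1) (by nlinarith) (d+1)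
    have hb' : 1 + (d+1:ℝ) * (μ - 1) ≤ μ^(d+1) := by
      have heq : (1 + (μ - 1))^(d+1) = μ^(d+1) := by ring_nf
      rw [← heq]
      push_cast at hb
      exact hb
    have h1μ : (1 - μ) * (R+ℓ) = ℓ := by
      rw [hμdef]; field_simp; ring
    nlinarith [mul_pos hδ hℓ]
  have hV0 : 0 ≤ V := by rw [hVdef]; positivity
  calc (1 - δ) * (V * (volume (Metric.ball (s•e) ℓ ∩
          {z : EuclideanSpace ℝ (Fin (d + 1)) | (inner ℝ z e : ℝ) < 0})).toReal)
      ≤ μ^(d+1) * (V * (volume (Metric.ball (s•e) ℓ ∩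
          {z : EuclideanSpace ℝ (Fin (d + 1)) | (inner ℝ z e : ℝ) < 0})).toReal) := by
        apply mul_le_mul_of_nonneg_right hμδ (by positivity)
    _ = V * (μ^(d+1) * (volume (Metric.ball (s•e) ℓ ∩
          {z : EuclideanSpace ℝ (Fin (d + 1)) | (inner ℝ z e : ℝ) < 0})).toReal) := by ring
    _ ≤ V * (volume (Metric.ball x ℓ ∩ Metric.ball (0 : EuclideanSpace ℝ (Fin (d+1))) R)).toReal :=
        mul_le_mul_of_nonneg_left htr hV0
end
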